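/- A subset C ⊆ B_k^n is a B_k-submodule of B_k^n (i.e., a linear code over B_k of length n) if and only if there exist F_{p^r}-linear codes C_1,…,C_{2^k} ⊆ F_{p^r}^n such that C = Ψ̄_k^{−1}(C_1,…,C_{2^k}). -/

import Mathlib

/-!
The Gray map `Φ_k` is a ring isomorphism `B_k ≃ F^{2^k}` (with `F = F_{p^r}`): the products
`∏ i, (v_i or 1 - v_i)` are sent to the standard basis vectors, so `Φ_k` is surjective, and
`B_k` is spanned over `F` by the `2^k` squarefree monomials in the `v_i`, so it is injective
by a dimension count. Over a ring `A ≃ ∏ i, R i` an `A`-submodule `M` of `A^n` is cut out by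
its coordinate projections: if `a` agrees in every coordinate `i` with some `m_i ∈ M`, then
`a = ∑ i, e_i • m_i ∈ M` for the orthogonal idempotents `e_i = φ⁻¹(δ_i)`.
-/

open MvPolynomial

set_option synthInstance.maxHeartbeats 400000
set_option maxHeartbeats 1000000

noncomputable def relIdeal (p r k : ℕ) [Fact p.Prime] : Ideal (MvPolynomial (Fin k) (GaloisField p r)) :=
  Ideal.span (Set.range fun i : Fin k => X i ^ 2 - X i)

abbrev B (p r k : ℕ) [Fact p.Prime] :=
  MvPolynomial (Fin k) (GaloisField p r) ⧸ relIdeal p r k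

noncomputable def v (p r k : ℕ) [Fact p.Prime] (i : Fin k) : B p r k :=
  Ideal.Quotient.mk _ (X i)

lemma v_idem (p r k : ℕ) [Fact p.Prime] (i : Fin k) : v p r k i ^ 2 = v p r k i := by
  have h : (X i ^ 2 - X i : MvPolynomial (Fin k) (GaloisField p r)) ∈ relIdeal p r k :=
    Ideal.subset_span ⟨i, rfl⟩
  have h2 := (Ideal.Quotient.eq_zero_iff_mem).mpr h
  rw [map_sub, map_pow] at h2
  have h3 := sub_eq_zero.mp h2
  simpa [v] using h3

lemma one_sub_v_idem (p r k : ℕ) [Fact p.Prime] (i : Fin k) :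
    (1 - v p r k i) ^ 2 = 1 - v p r k i := by
  have h : (1 - v p r k i) ^ 2 = 1 - 2 * v p r k i + v p r k i ^ 2 := by ring
  rw [h, v_idem]; ring

noncomputable def ThAux (p r k : ℕ) [Fact p.Prime] (S : Finset (Fin k)) :
    MvPolynomial (Fin k) (GaloisField p r) →+* B p r k :=
  (aeval (fun i : Fin k => if i ∈ S then 1 - v p r k i else v p r k i)).toRingHom

lemma ThAux_cond (p r k : ℕ) [Fact p.Prime] (S : Finset (Fin k)) :
    relIdeal p r k ≤ RingHom.ker (ThAux p r k S) := by
  refine Ideal.span_le.mpr ?_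
  rintro _ ⟨i, rfl⟩
  simp only [SetLike.mem_coe, RingHom.mem_ker, ThAux, AlgHom.toRingHom_eq_coe,
    RingHom.coe_coe, map_sub, map_pow, aeval_X]
  by_cases h : i ∈ S
  · rw [if_pos h, one_sub_v_idem, sub_self]
  · rw [if_neg h, v_idem, sub_self]

/-- The automorphism `Θ_S` of `B_k`, determined by `v_i ↦ 1 - v_i` for `i ∈ S` and
`v_i ↦ v_i` otherwise, fixing `F_{p^r}` pointwise. -/
noncomputable def Th (p r k : ℕ) [Fact p.Prime] (S : Finset (Fin k)) :
    B p r k →+* B p r k :=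
  Ideal.Quotient.lift (relIdeal p r k) (ThAux p r k S) (fun _ ha => ThAux_cond p r k S ha)

noncomputable def LamAux (p r k : ℕ) [Fact p.Prime] (π : Equiv.Perm (Fin k)) (t : ℕ) :
    MvPolynomial (Fin k) (GaloisField p r) →+* B p r k :=
  eval₂Hom ((Ideal.Quotient.mk (relIdeal p r k)).comp
      ((C : GaloisField p r →+* MvPolynomial (Fin k) (GaloisField p r)).comp
        (iterateFrobenius (GaloisField p r) p t)))
    (fun i => v p r k (π i))

lemma LamAux_cond (p r k : ℕ) [Fact p.Prime] (π : Equiv.Perm (Fin k)) (t : ℕ) :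
    relIdeal p r k ≤ RingHom.ker (LamAux p r k π t) := by
  refine Ideal.span_le.mpr ?_
  rintro _ ⟨i, rfl⟩
  simp only [SetLike.mem_coe, RingHom.mem_ker, LamAux, map_sub, map_pow, eval₂Hom_X']
  rw [v_idem, sub_self]

/-- The automorphism `Λ_{π,t}` of `B_k`, acting on `F_{p^r}` as the Frobenius power
`α ↦ α^{p^t}` and sending `v_i ↦ v_{π(i)}`. -/
noncomputable def Lam (p r k : ℕ) [Fact p.Prime] (π : Equiv.Perm (Fin k)) (t : ℕ) :
    B p r k →+* B p r k :=
  Ideal.Quotient.lift (relIdeal p r k) (LamAux p r k π t) (fun _ ha => LamAux_cond p r k π t ha)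

noncomputable def PhiAux (p r k : ℕ) [Fact p.Prime] :
    MvPolynomial (Fin k) (GaloisField p r) →+* (Fin (2 ^ k) → GaloisField p r) :=
  Pi.ringHom fun j =>
    eval₂Hom (RingHom.id (GaloisField p r))
      (fun i : Fin k => if Nat.testBit (j : ℕ) (i : ℕ) then 1 else 0)

lemma PhiAux_cond (p r k : ℕ) [Fact p.Prime] :
    relIdeal p r k ≤ RingHom.ker (PhiAux p r k) := by
  refine Ideal.span_le.mpr ?_
  rintro _ ⟨i, rfl⟩
  simp only [SetLike.mem_coe, RingHom.mem_ker, PhiAux]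
  funext j
  show eval₂Hom (RingHom.id (GaloisField p r))
    (fun i : Fin k => if Nat.testBit (j : ℕ) (i : ℕ) then 1 else 0) (X i ^ 2 - X i) = 0
  simp only [map_sub, map_pow, eval₂Hom_X']
  by_cases h : Nat.testBit (j : ℕ) (i : ℕ) <;> simp [h]

/-- The Gray map `Φ_k : B_k → F_{p^r}^{2^k}`: the coordinate indexed by `j` is the
evaluation of (a representative of) an element of `B_k` at the point whose `i`-th
coordinate is the `i`-th binary digit of `j`.  This agrees with the recursive
definition `Φ_k(α + β v_k) = (Φ_{k-1}(α), Φ_{k-1}(α + β))`, `Φ_0 = id`. -/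
noncomputable def Phi (p r k : ℕ) [Fact p.Prime] :
    B p r k →+* (Fin (2 ^ k) → GaloisField p r) :=
  Ideal.Quotient.lift (relIdeal p r k) (PhiAux p r k) (fun _ ha => PhiAux_cond p r k ha)

section PiDecomposition

variable {A : Type*} [Semiring A]

def RingHom.compLeftₛₗ {S : Type*} [Semiring S] (σ : A →+* S) (m : Type*) :
    (m → A) →ₛₗ[σ] (m → S) where
  toFun a := σ ∘ a
  map_add' _ _ := funext fun _ => map_add σ _ _
  map_smul' _ _ := funext fun _ => map_mul σ _ _

@[simp]
theorem RingHom.compLeftₛₗ_apply {S : Type*} [Semiring S] (σ : A →+* S) {m : Type*}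
    (a : m → A) (b : m) : σ.compLeftₛₗ m a b = σ (a b) :=
  rfl

theorem exists_submodule_eq_iff_of_ringEquiv_pi {ι : Type*} [Fintype ι] {R : ι → Type*}
    [∀ i, Semiring (R i)] (φ : A ≃+* ((i : ι) → R i)) {m : Type*} (C : Set (m → A)) :
    (∃ M : Submodule A (m → A), C = M) ↔
      ∃ D : (i : ι) → Submodule (R i) (m → R i),
        C = {a | ∀ i, (fun b => φ (a b) i) ∈ D i} := by
  classical
  let σ i : A →+* R i := (Pi.evalRingHom R i).comp φ
  constructor
  · rintro ⟨M, rfl⟩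
    have (i : ι) : RingHomSurjective (σ i) :=
      ⟨fun x => ⟨φ.symm (Pi.single i x), by simp [σ]⟩⟩
    refine ⟨fun i => M.map ((σ i).compLeftₛₗ m),
      Set.ext fun a => ⟨fun ha i => ⟨a, ha, rfl⟩, fun ha => ?_⟩⟩
    choose a' ha'M ha'a using ha
    have decomp : a = ∑ i, φ.symm (Pi.single i 1) • a' i := by
      funext b
      apply φ.injective
      funext j
      have hj : φ (a' j b) j = φ (a b) j := congrFun (ha'a j) b
      simp only [Finset.sum_apply, map_sum, Pi.smul_apply, smul_eq_mul, map_mul,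
        RingEquiv.apply_symm_apply, Pi.mul_apply]
      rw [Finset.sum_eq_single j (fun i _ hij => by simp [Pi.single_eq_of_ne' hij]) (by simp)]
      simp [hj]
    rw [decomp]
    exact sum_mem fun i _ => M.smul_mem _ (ha'M i)
  · rintro ⟨D, rfl⟩
    exact ⟨⨅ i, (D i).comap ((σ i).compLeftₛₗ m), by ext; simp [σ]; rfl⟩

end PiDecomposition

theorem Fin.eq_of_testBit_eq {k : ℕ} {j l : Fin (2 ^ k)}
    (h : ∀ i : Fin k, Nat.testBit j i = Nat.testBit l i) : j = l := by
  refine Fin.ext (Nat.eq_of_testBit_eq fun i => ?_)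
  by_cases hi : i < k
  · exact h ⟨i, hi⟩
  · have hk : 2 ^ k ≤ 2 ^ i := Nat.pow_le_pow_right two_pos (not_lt.1 hi)
    rw [Nat.testBit_eq_false_of_lt (j.2.trans_le hk), Nat.testBit_eq_false_of_lt (l.2.trans_le hk)]

section GrayMap

variable (p r k : ℕ) [Fact p.Prime]

theorem Phi_mk_apply (q : MvPolynomial (Fin k) (GaloisField p r)) (j : Fin (2 ^ k)) :
    Phi p r k (Ideal.Quotient.mk _ q) j =
      eval (fun i : Fin k => if Nat.testBit j i then 1 else 0) q :=
  rfl

theorem Phi_v_apply (i : Fin k) (j : Fin (2 ^ k)) :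
    Phi p r k (v p r k i) j = if Nat.testBit j i then 1 else 0 := by
  simp [v, Phi_mk_apply]

theorem Phi_algebraMap (c : GaloisField p r) :
    Phi p r k (algebraMap (GaloisField p r) (B p r k) c) = algebraMap _ _ c := by
  funext j
  exact eval_C c

noncomputable def PhiAlgHom : B p r k →ₐ[GaloisField p r] (Fin (2 ^ k) → GaloisField p r) :=
  { Phi p r k with commutes' := Phi_algebraMap p r k }

theorem PhiAlgHom_apply (x : B p r k) : PhiAlgHom p r k x = Phi p r k x :=
  rfl

noncomputable def grayIdem (j : Fin (2 ^ k)) : B p r k :=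
  ∏ i : Fin k, if Nat.testBit j i then v p r k i else 1 - v p r k i

theorem Phi_grayIdem (j : Fin (2 ^ k)) : Phi p r k (grayIdem p r k j) = Pi.single j 1 := by
  funext l
  have factor (i : Fin k) :
      Phi p r k (if Nat.testBit j i then v p r k i else 1 - v p r k i) l =
        if Nat.testBit l i = Nat.testBit j i then 1 else 0 := by
    split_ifs <;> simp_all [Phi_v_apply]
  simp only [grayIdem, map_prod, Finset.prod_apply, factor, Fintype.prod_boole]
  by_cases hlj : l = j
  · simp [hlj]
  · rw [Pi.single_eq_of_ne hlj, if_neg (mt Fin.eq_of_testBit_eq hlj)]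

theorem Phi_surjective : Function.Surjective (Phi p r k) := fun f =>
  ⟨∑ j, f j • grayIdem p r k j, by
    simp_rw [← PhiAlgHom_apply, map_sum, map_smul, PhiAlgHom_apply, Phi_grayIdem]
    ext l
    simp [Pi.single_apply]⟩

theorem isIdempotentElem_v (i : Fin k) : IsIdempotentElem (v p r k i) := by
  rw [IsIdempotentElem, ← sq, v_idem]

theorem exists_eq_prod_v_of_mem_closure {x : B p r k}
    (hx : x ∈ Submonoid.closure (Set.range (v p r k))) :
    ∃ S : Finset (Fin k), x = ∏ i ∈ S, v p r k i := by
  obtain ⟨a, rfl⟩ := Submonoid.mem_closure_range_iff.1 hx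
  exact ⟨a.support, Finset.prod_congr rfl fun i hi =>
    (isIdempotentElem_v p r k i).pow_eq (Finsupp.mem_support_iff.1 hi)⟩

theorem adjoin_range_v : Algebra.adjoin (GaloisField p r) (Set.range (v p r k)) = ⊤ := by
  have : Set.range (v p r k) = Ideal.Quotient.mkₐ (GaloisField p r) (relIdeal p r k) ''
      Set.range (X : Fin k → MvPolynomial (Fin k) (GaloisField p r)) := by
    rw [← Set.range_comp]
    rfl
  rw [this, Algebra.adjoin_image, adjoin_range_X, Algebra.map_top, AlgHom.range_eq_top]
  exact Ideal.Quotient.mkₐ_surjective _ _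

theorem span_prod_v_eq_top :
    Submodule.span (GaloisField p r) (Set.range fun S : Finset (Fin k) => ∏ i ∈ S, v p r k i) =
      ⊤ := by
  rw [eq_top_iff, ← Algebra.top_toSubmodule, ← adjoin_range_v, Algebra.adjoin_eq_span]
  refine Submodule.span_le.2 fun x hx => Submodule.subset_span ?_
  obtain ⟨S, rfl⟩ := exists_eq_prod_v_of_mem_closure p r k hx
  exact ⟨S, rfl⟩

instance : Module.Finite (GaloisField p r) (B p r k) :=
  ⟨span_prod_v_eq_top p r k ▸ Submodule.fg_span (Set.finite_range _)⟩

theorem finrank_le_two_pow : Module.finrank (GaloisField p r) (B p r k) ≤ 2 ^ k := by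
  have := finrank_range_le_card (R := GaloisField p r)
    fun S : Finset (Fin k) => ∏ i ∈ S, v p r k i
  rwa [Set.finrank, span_prod_v_eq_top, finrank_top, Fintype.card_finset, Fintype.card_fin] at this

theorem Phi_bijective : Function.Bijective (Phi p r k) := by
  have hsurj : Function.Surjective (PhiAlgHom p r k).toLinearMap := Phi_surjective p r k
  have hrank : Module.finrank (GaloisField p r) (B p r k) = 2 ^ k :=
    le_antisymm (finrank_le_two_pow p r k)
      (Module.finrank_fin_fun (GaloisField p r) (n := 2 ^ k) ▸
        LinearMap.finrank_le_finrank_of_surjective hsurj)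
  exact ⟨(LinearMap.injective_iff_surjective_of_finrank_eq_finrank
    (hrank.trans (Module.finrank_fin_fun _).symm)).2 hsurj, hsurj⟩

end GrayMap

theorem stmt_15_general (p r k n : ℕ) [Fact p.Prime]
    (C : Set (Fin n → B p r k)) :
    (∃ M : Submodule (B p r k) (Fin n → B p r k), C = (M : Set (Fin n → B p r k))) ↔
      ∃ D : Fin (2 ^ k) → Submodule (GaloisField p r) (Fin n → GaloisField p r),
        C = {a | ∀ i : Fin (2 ^ k), (fun b => Phi p r k (a b) i) ∈ D i} :=
  exists_submodule_eq_iff_of_ringEquiv_pi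
    (RingEquiv.ofBijective (Phi p r k) (Phi_bijective p r k)) C

/-- A subset `C ⊆ B_k^n` is a `B_k`-submodule (a linear code of length `n` over `B_k`)
iff there are `F_{p^r}`-linear codes `C_1, …, C_{2^k} ⊆ F_{p^r}^n` with
`C = Ψ̄_k^{-1}(C_1, …, C_{2^k})`. -/
theorem stmt_15 (p r k n : ℕ) [Fact p.Prime] [NeZero n] (hr : 1 ≤ r)
    (C : Set (Fin n → B p r k)) :
    (∃ M : Submodule (B p r k) (Fin n → B p r k), C = (M : Set (Fin n → B p r k))) ↔
      ∃ D : Fin (2 ^ k) → Submodule (GaloisField p r) (Fin n → GaloisField p r),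
        C = {a | ∀ i : Fin (2 ^ k), (fun b => Phi p r k (a b) i) ∈ D i} :=
  stmt_15_general p r k n C
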